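/- Every rational angle in Q(i) is, up to equivalence, of the form (v, λv) with v ∈ Q(i) \ {0} and λ ∈ {i, i+1, i−1}. That is, if v₀, v₁ ∈ Q(i) \ {0} and arg(v₁/v₀) ∈ πQ \ πZ, then v₁/v₀ lies on one of the lines R·i, R·(1+i), R·(1−i). -/

import Mathlib

/-!
For `z = v₁ / v₀ ∈ ℚ(i)` the quotient `w = z / z̄ = exp (2 i arg z)` again lies in `ℚ(i)`, and it is
a root of unity because `arg z ∈ πℚ`. Writing `w = c + d i`, the numbers `2c = w + w̄` and
`2d = -i (w - w̄)` are rational algebraic integers, hence integers, with `(2c)² + (2d)² = 4`; so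
`w ∈ {±1, ±i}`. Here `w = 1` would force `arg z ∈ πℤ`, while `w = -1, i, -i` put `z` on the line
`ℝ i`, `ℝ (1 + i)`, `ℝ (1 - i)` respectively.
-/

open Complex

theorem Int.eq_of_sq_add_sq_eq_four {k l : ℤ} (h : k ^ 2 + l ^ 2 = 4) :
    k = 2 ∧ l = 0 ∨ k = -2 ∧ l = 0 ∨ k = 0 ∧ l = 2 ∨ k = 0 ∧ l = -2 := by
  obtain ⟨hk₁, hk₂⟩ : -2 ≤ k ∧ k ≤ 2 := by constructor <;> nlinarith [sq_nonneg l]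
  obtain ⟨hl₁, hl₂⟩ : -2 ≤ l ∧ l ≤ 2 := by constructor <;> nlinarith [sq_nonneg k]
  interval_cases k <;> interval_cases l <;> omega

theorem Rat.exists_int_eq_of_isIntegral {K : Type*} [DivisionRing K] [CharZero K] {q : ℚ}
    (h : IsIntegral ℤ (q : K)) : ∃ k : ℤ, q = k := by
  obtain ⟨k, hk⟩ := h.exists_int_iff_exists_rat.mp ⟨q, rfl⟩
  exact ⟨k, by exact_mod_cast hk⟩

def IsGaussianRat (z : ℂ) : Prop := ∃ a b : ℚ, z = a + b * I

namespace IsGaussianRat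

theorem mul {z w : ℂ} (hz : IsGaussianRat z) (hw : IsGaussianRat w) :
    IsGaussianRat (z * w) := by
  obtain ⟨a, b, rfl⟩ := hz
  obtain ⟨c, d, rfl⟩ := hw
  exact ⟨a * c - b * d, a * d + b * c, by apply Complex.ext <;> simp⟩

theorem conj {z : ℂ} (hz : IsGaussianRat z) : IsGaussianRat (starRingEnd ℂ z) := by
  obtain ⟨a, b, rfl⟩ := hz
  exact ⟨a, -b, by simp⟩

theorem inv {z : ℂ} (hz : IsGaussianRat z) : IsGaussianRat z⁻¹ := by
  obtain ⟨a, b, rfl⟩ := id hz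
  rw [inv_def]
  exact hz.conj.mul ⟨(a * a + b * b)⁻¹, 0, by simp [normSq_apply]⟩

theorem div {z w : ℂ} (hz : IsGaussianRat z) (hw : IsGaussianRat w) : IsGaussianRat (z / w) :=
  hz.mul hw.inv

theorem eq_of_pow_eq_one {w : ℂ} (hw : IsGaussianRat w) {n : ℕ} (hn : n ≠ 0) (h : w ^ n = 1) :
    w = 1 ∨ w = -1 ∨ w = I ∨ w = -I := by
  have hint : IsIntegral ℤ w := .of_pow (Nat.pos_of_ne_zero hn) (h ▸ isIntegral_one)
  have hconj : IsIntegral ℤ (starRingEnd ℂ w) :=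
    .of_pow (Nat.pos_of_ne_zero hn) (by rw [← map_pow, h, map_one]; exact isIntegral_one)
  have hnorm : normSq w = 1 := by
    rw [normSq_eq_norm_sq, norm_eq_one_of_pow_eq_one h hn, one_pow]
  obtain ⟨c, d, rfl⟩ := hw
  have hcd : c ^ 2 + d ^ 2 = 1 := by
    have : ((c ^ 2 + d ^ 2 : ℚ) : ℝ) = 1 := by simpa [normSq_apply, ← sq] using hnorm
    exact_mod_cast this
  have h2c : ((2 * c : ℚ) : ℂ) = (c + d * I) + starRingEnd ℂ (c + d * I) := by
    push_cast
    simp only [map_add, map_mul, map_ratCast, conj_I]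
    ring
  have h2d : ((2 * d : ℚ) : ℂ) = ((c + d * I) - starRingEnd ℂ (c + d * I)) * -I := by
    push_cast
    simp only [map_add, map_mul, map_ratCast, conj_I]
    linear_combination (2 * (d : ℂ)) * I_sq
  obtain ⟨k, hk⟩ := Rat.exists_int_eq_of_isIntegral (h2c ▸ hint.add hconj)
  obtain ⟨l, hl⟩ :=
    Rat.exists_int_eq_of_isIntegral (h2d ▸ (hint.sub hconj).mul isIntegral_int_I.neg)
  have hkl : k ^ 2 + l ^ 2 = 4 := by
    have : (k : ℚ) ^ 2 + (l : ℚ) ^ 2 = 4 := by rw [← hk, ← hl]; linear_combination 4 * hcd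
    exact_mod_cast this
  obtain rfl : c = k / 2 := by linarith
  obtain rfl : d = l / 2 := by linarith
  rcases Int.eq_of_sq_add_sq_eq_four hkl with ⟨rfl, rfl⟩ | ⟨rfl, rfl⟩ | ⟨rfl, rfl⟩ | ⟨rfl, rfl⟩ <;>
    norm_num

end IsGaussianRat

open ComplexConjugate

theorem div_conj_eq_exp_two_mul_arg_mul_I {z : ℂ} (hz : z ≠ 0) :
    z / conj z = exp (2 * arg z * I) := by
  have hpolar := norm_mul_exp_arg_mul_I z
  have hconj : conj z = ‖z‖ * exp (-(arg z * I)) := by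
    conv_lhs => rw [← hpolar]
    rw [map_mul, ← exp_conj]
    simp
  rw [hconj, div_eq_iff (by simpa using hz), mul_left_comm, ← exp_add]
  convert hpolar.symm using 3
  ring

theorem exists_ofReal_mul_of_div_conj {z : ℂ} (hz : z ≠ 0)
    (h : z / conj z = -1 ∨ z / conj z = I ∨ z / conj z = -I) :
    ∃ r : ℝ, z = r * I ∨ z = r * (1 + I) ∨ z = r * (1 - I) := by
  simp only [div_eq_iff ((map_ne_zero _).mpr hz), Complex.ext_iff] at h
  rcases h with ⟨hre, -⟩ | ⟨hre, -⟩ | ⟨hre, -⟩ <;>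
    simp only [neg_mul, one_mul, neg_re, mul_re, I_re, I_im, conj_re, conj_im, zero_mul,
      mul_neg, sub_neg_eq_add, zero_add] at hre
  · exact ⟨z.im, Or.inl (Complex.ext (by simp [show z.re = 0 by linarith]) (by simp))⟩
  · exact ⟨z.re, Or.inr (Or.inl (Complex.ext (by simp) (by simp [hre])))⟩
  · exact ⟨z.re, Or.inr (Or.inr (Complex.ext (by simp) (by simp [hre])))⟩

theorem rational_angles_in_gaussian_field_general
    (v₀ v₁ : ℂ)
    (hv₀ : ∃ a b : ℚ, v₀ = (a : ℂ) + (b : ℂ) * Complex.I)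
    (hv₁ : ∃ a b : ℚ, v₁ = (a : ℂ) + (b : ℂ) * Complex.I)
    (hrat : ∃ q : ℚ, Complex.arg (v₁ / v₀) = (q : ℝ) * Real.pi)
    (hnint : ∀ k : ℤ, Complex.arg (v₁ / v₀) ≠ (k : ℝ) * Real.pi) :
    ∃ r : ℝ, v₁ / v₀ = (r : ℂ) * Complex.I ∨
      v₁ / v₀ = (r : ℂ) * (1 + Complex.I) ∨
      v₁ / v₀ = (r : ℂ) * (1 - Complex.I) := by
  set z := v₁ / v₀
  obtain ⟨q, hq⟩ := hrat
  have hz : z ≠ 0 := fun h ↦ hnint 0 (by simp [h])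
  have hexp : z / conj z = exp ((2 * q : ℚ) * Real.pi * I) := by
    rw [div_conj_eq_exp_two_mul_arg_mul_I hz, hq]; push_cast; ring_nf
  have hgauss : IsGaussianRat (z / conj z) :=
    have hzq : IsGaussianRat z := IsGaussianRat.div hv₁ hv₀
    hzq.div hzq.conj
  rcases hgauss.eq_of_pow_eq_one (by positivity)
    (hexp ▸ exp_rat_mul_pi_mul_I_pow_two_mul_den _) with h | h
  · obtain ⟨n, hn⟩ := exp_eq_one_iff.mp (div_conj_eq_exp_two_mul_arg_mul_I hz ▸ h)
    have harg : 2 * arg z = n * (2 * Real.pi) := by simpa using congrArg im hn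
    exact absurd (by linarith) (hnint n)
  · exact exists_ofReal_mul_of_div_conj hz h

/-- Every rational angle in `ℚ(i)` is, up to equivalence, of the form `(v, λv)` with
`λ ∈ {i, i+1, i−1}`: if `v₀, v₁ ∈ ℚ(i)` are nonzero and `arg(v₁/v₀)` is a rational
multiple of `π` but not an integer multiple of `π`, then `v₁/v₀` lies on one of the
lines `ℝ·i`, `ℝ·(1+i)`, `ℝ·(1−i)`. -/
theorem rational_angles_in_gaussian_field
    (v₀ v₁ : ℂ)
    (hv₀ : ∃ a b : ℚ, v₀ = (a : ℂ) + (b : ℂ) * Complex.I)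
    (hv₁ : ∃ a b : ℚ, v₁ = (a : ℂ) + (b : ℂ) * Complex.I)
    (h₀ : v₀ ≠ 0) (h₁ : v₁ ≠ 0)
    (hrat : ∃ q : ℚ, Complex.arg (v₁ / v₀) = (q : ℝ) * Real.pi)
    (hnint : ∀ k : ℤ, Complex.arg (v₁ / v₀) ≠ (k : ℝ) * Real.pi) :
    ∃ r : ℝ, v₁ / v₀ = (r : ℂ) * Complex.I ∨
      v₁ / v₀ = (r : ℂ) * (1 + Complex.I) ∨
      v₁ / v₀ = (r : ℂ) * (1 - Complex.I) :=
  rational_angles_in_gaussian_field_general v₀ v₁ hv₀ hv₁ hrat hnint
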